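/- Let (R_k)_{k=1}^K be a polyhedral partition of ℝ^d and let R_k, R_ℓ be neighboring regions with frontier F_{k,ℓ} (the relative interior of R_k ∩ R_ℓ). Then for every x ∈ F_{k,ℓ} there exists ε > 0 such that the open ball B(x, ε) is contained in R_k ∪ R_ℓ. -/

import Mathlib

open Set Metric
open scoped RealInnerProductSpace

/-- A convex polyhedron in `ℝ^d`: a nonempty intersection of finitely many closed half-spaces. -/
def IsConvexPolyhedron {d : ℕ} (S : Set (EuclideanSpace ℝ (Fin d))) : Prop :=
  S.Nonempty ∧ ∃ (m : ℕ) (a : Fin m → EuclideanSpace ℝ (Fin d)) (c : Fin m → ℝ),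
    S = {x | ∀ i, ⟪a i, x⟫ ≤ c i}

/-- A polyhedral partition of `ℝ^d`: a finite family of convex polyhedra covering `ℝ^d`,
each with nonempty interior, and with pairwise disjoint interiors. -/
def IsPolyhedralPartition {d K : ℕ} (R : Fin K → Set (EuclideanSpace ℝ (Fin d))) : Prop :=
  (∀ k, IsConvexPolyhedron (R k)) ∧
  (⋃ k, R k) = Set.univ ∧
  (∀ k, (interior (R k)).Nonempty) ∧
  (∀ k l, k ≠ l → interior (R k) ∩ interior (R l) = ∅)

/-- Regions `R k` and `R l` are neighboring: `k ≠ l` and the affine hull of `R k ∩ R l`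
is an affine hyperplane, i.e. has dimension `d - 1`. -/
def Neighboring {d K : ℕ} (R : Fin K → Set (EuclideanSpace ℝ (Fin d))) (k l : Fin K) : Prop :=
  k ≠ l ∧ (R k ∩ R l).Nonempty ∧
    Module.finrank ℝ (affineSpan ℝ (R k ∩ R l)).direction = d - 1

/-- The frontier between two regions: the relative interior of `R k ∩ R l`. -/
noncomputable def frontierBetween {d K : ℕ} (R : Fin K → Set (EuclideanSpace ℝ (Fin d)))
    (k l : Fin K) : Set (EuclideanSpace ℝ (Fin d)) :=
  intrinsicInterior ℝ (R k ∩ R l)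

/-- The set `𝓕` of all frontier points: the union of all frontiers between
neighboring regions. -/
noncomputable def frontierPoints {d K : ℕ} (R : Fin K → Set (EuclideanSpace ℝ (Fin d))) :
    Set (EuclideanSpace ℝ (Fin d)) :=
  ⋃ (k) (l) (_ : Neighboring R k l), frontierBetween R k l


/-- Auxiliary: a polyhedron whose active constraints at `x` are all multiples of `n`,
all "pointing the same way", locally contains one closed half-ball at `x`. -/
lemma aux_side {d m : ℕ} (a : Fin m → EuclideanSpace ℝ (Fin d)) (c : Fin m → ℝ)
    (R : Set (EuclideanSpace ℝ (Fin d))) (hR : R = {y | ∀ i, ⟪a i, y⟫ ≤ c i})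
    (hint : (interior R).Nonempty) (x n : EuclideanSpace ℝ (Fin d)) (hn : n ≠ 0)
    (hx : x ∈ R) (hkey : ∀ i, ⟪a i, x⟫ = c i → ∃ r : ℝ, a i = r • n) :
    ∃ s : ℝ, (s = 1 ∨ s = -1) ∧ ∃ ε > 0, ∀ y, dist y x < ε →
      s * ⟪n, y - x⟫ ≤ 0 → y ∈ R := by
  have hxR : ∀ i, ⟪a i, x⟫ ≤ c i := by rw [hR] at hx; exact hx
  -- main construction given a consistent sign
  have main : ∀ s : ℝ, (s = 1 ∨ s = -1) →
      (∀ i r, ⟪a i, x⟫ = c i → a i = r • n → 0 ≤ s * r) →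
      ∃ ε > 0, ∀ y, dist y x < ε → s * ⟪n, y - x⟫ ≤ 0 → y ∈ R := by
    intro s hs hsign
    have hs2 : s * s = 1 := by rcases hs with h | h <;> rw [h] <;> ring
    set U : Set (EuclideanSpace ℝ (Fin d)) :=
      ⋂ i, {y | ⟪a i, x⟫ = c i ∨ ⟪a i, y⟫ < c i} with hU
    have hUopen : IsOpen U := by
      apply isOpen_iInter_of_finite
      intro i
      by_cases h : ⟪a i, x⟫ = c i
      · have : {y : EuclideanSpace ℝ (Fin d) | ⟪a i, x⟫ = c i ∨ ⟪a i, y⟫ < c i} = univ := by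
          ext y; simp only [Set.mem_setOf_eq, h, true_or, Set.mem_univ]
        rw [this]; exact isOpen_univ
      · have : {y : EuclideanSpace ℝ (Fin d) | ⟪a i, x⟫ = c i ∨ ⟪a i, y⟫ < c i}
            = {y | ⟪a i, y⟫ < c i} := by
          ext y; simp only [Set.mem_setOf_eq, h, false_or]
        rw [this]
        exact isOpen_lt (innerSL ℝ (a i)).continuous continuous_const
    have hxU : x ∈ U := by
      rw [hU]
      refine mem_iInter.2 fun i => ?_
      rcases lt_or_eq_of_le (hxR i) with h | h
      · exact Or.inr h
      · exact Or.inl h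
    obtain ⟨ε, hε, hball⟩ := Metric.isOpen_iff.1 hUopen x hxU
    refine ⟨ε, hε, fun y hy hside => ?_⟩
    have hyU : y ∈ U := hball (by rwa [Metric.mem_ball])
    rw [hR]
    intro i
    have := mem_iInter.1 hyU i
    rcases this with heq | hlt
    · obtain ⟨r, har⟩ := hkey i heq
      have hrs : 0 ≤ s * r := hsign i r heq har
      have h1 : ⟪a i, y⟫ = c i + r * ⟪n, y - x⟫ := by
        have : ⟪a i, y - x⟫ = r * ⟪n, y - x⟫ := by rw [har, real_inner_smul_left]
        have h2 : ⟪a i, y⟫ - ⟪a i, x⟫ = r * ⟪n, y - x⟫ := by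
          rw [← inner_sub_right]; exact this
        linarith [h2, heq]
      have h3 : r * ⟪n, y - x⟫ = (s * r) * (s * ⟪n, y - x⟫) := by
        have : (s * r) * (s * ⟪n, y - x⟫) = (s * s) * (r * ⟪n, y - x⟫) := by ring
        rw [this, hs2, one_mul]
      have h4 : (s * r) * (s * ⟪n, y - x⟫) ≤ 0 := mul_nonpos_of_nonneg_of_nonpos hrs hside
      rw [h1, h3]; linarith
    · exact le_of_lt hlt
  by_cases hpos : ∃ i, ⟪a i, x⟫ = c i ∧ ∃ r : ℝ, 0 < r ∧ a i = r • n
  · by_cases hneg : ∃ j, ⟪a j, x⟫ = c j ∧ ∃ q : ℝ, q < 0 ∧ a j = q • n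
    · -- both signs: R lies in a hyperplane, contradicting nonempty interior
      exfalso
      obtain ⟨i, hieq, r, hr, har⟩ := hpos
      obtain ⟨j, hjeq, q, hq, haq⟩ := hneg
      have hle : ∀ y ∈ R, ⟪n, y⟫ ≤ ⟪n, x⟫ := by
        intro y hy
        rw [hR] at hy
        have h1 : ⟪a i, y⟫ ≤ ⟪a i, x⟫ := by rw [hieq]; exact hy i
        rw [har, real_inner_smul_left, real_inner_smul_left] at h1
        exact le_of_mul_le_mul_left h1 hr
      have hge : ∀ y ∈ R, ⟪n, x⟫ ≤ ⟪n, y⟫ := by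
        intro y hy
        rw [hR] at hy
        have h1 : ⟪a j, y⟫ ≤ ⟪a j, x⟫ := by rw [hjeq]; exact hy j
        rw [haq, real_inner_smul_left, real_inner_smul_left] at h1
        nlinarith
      obtain ⟨z, hz⟩ := hint
      obtain ⟨ρ, hρ, hballz⟩ := Metric.isOpen_iff.1 isOpen_interior z hz
      have hnn : (0:ℝ) < ‖n‖ := norm_pos_iff.2 hn
      set w := z + (ρ / (2 * ‖n‖)) • n with hw
      have hwz : dist w z < ρ := by
        have h0 : w - z = (ρ / (2 * ‖n‖)) • n := by rw [hw]; module
        rw [dist_eq_norm, h0, norm_smul, Real.norm_eq_abs, abs_of_pos (by positivity)]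
        have h1 : ρ / (2 * ‖n‖) * ‖n‖ = ρ / 2 := by field_simp
        rw [h1]; linarith
      have hwR : w ∈ R := interior_subset (hballz (by rwa [Metric.mem_ball]))
      have hzR : z ∈ R := interior_subset hz
      have h1 : ⟪n, w⟫ = ⟪n, z⟫ + (ρ / (2 * ‖n‖)) * ‖n‖ ^ 2 := by
        rw [hw, inner_add_right, real_inner_smul_right, real_inner_self_eq_norm_sq]
      have h2 := hle w hwR
      have h3 := hge z hzR
      have h4 : 0 < ρ / (2 * ‖n‖) * ‖n‖ ^ 2 := by positivity
      linarith
    · -- all active constraints have nonnegative multiplier: s = 1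
      push_neg at hneg
      refine ⟨1, Or.inl rfl, main 1 (Or.inl rfl) fun i r heq har => ?_⟩
      rw [one_mul]
      by_contra h
      push_neg at h
      exact absurd har (hneg i heq r h)
  · -- all active constraints have nonpositive multiplier: s = -1
    push_neg at hpos
    refine ⟨-1, Or.inr rfl, main (-1) (Or.inr rfl) fun i r heq har => ?_⟩
    have : ¬ (0 < r) := fun h => absurd har (hpos i heq r h)
    push_neg at this
    nlinarith

/-- For a polyhedral partition `(R k)` of `ℝ^d` and neighboring regions `R k`, `R l`,
every point `x` in the frontier `F_{k,l}` (the relative interior of `R k ∩ R l`) has an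
open ball `B(x, ε)` contained in `R k ∪ R l`. -/
theorem ball_subset_union_of_mem_frontierBetween {d K : ℕ}
    (R : Fin K → Set (EuclideanSpace ℝ (Fin d)))
    (hpart : IsPolyhedralPartition R)
    (k l : Fin K) (hnb : Neighboring R k l) :
    ∀ x ∈ frontierBetween R k l, ∃ ε > (0 : ℝ), Metric.ball x ε ⊆ R k ∪ R l := by
  obtain ⟨hpoly, hcover, hintne, hdisj⟩ := hpart
  obtain ⟨hkl, hFne, hdim⟩ := hnb
  intro x hxF
  -- dispose of the degenerate case d = 0
  rcases Nat.eq_zero_or_pos d with hd0 | hd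
  · exfalso
    obtain ⟨zk, hzk⟩ := hintne k
    obtain ⟨zl, hzl⟩ := hintne l
    have : zk = zl := by subst hd0; exact Subsingleton.elim zk zl
    have : zk ∈ interior (R k) ∩ interior (R l) := ⟨hzk, this ▸ hzl⟩
    rw [hdisj k l hkl] at this
    exact this
  set F := R k ∩ R l with hF
  set H := affineSpan ℝ F with hH
  have hxFmem : x ∈ F := intrinsicInterior_subset hxF
  have hxH : x ∈ H := subset_affineSpan ℝ F hxFmem
  -- Step A: a relative neighborhood of x inside H is contained in F
  obtain ⟨δ, hδ, hrel⟩ : ∃ δ > 0, ∀ y ∈ (H : Set _), dist y x < δ → y ∈ F := by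
    obtain ⟨z, hz, hzx⟩ := hxF
    obtain ⟨δ, hδ, hb⟩ := Metric.mem_nhds_iff.1 (mem_interior_iff_mem_nhds.1 hz)
    refine ⟨δ, hδ, fun y hy hyd => ?_⟩
    have : (⟨y, hy⟩ : H) ∈ Metric.ball z δ := by
      rw [Metric.mem_ball, Subtype.dist_eq, hzx]
      exact hyd
    exact hb this
  -- Step B: the normal vector n
  have hfin : Module.finrank ℝ (EuclideanSpace ℝ (Fin d)) = d := finrank_euclideanSpace_fin
  have hdim' : Module.finrank ℝ H.direction = d - 1 := hdim
  have horth : Module.finrank ℝ H.directionᗮ = 1 := by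
    have := Submodule.finrank_add_finrank_orthogonal H.direction
    rw [hdim', hfin] at this
    omega
  obtain ⟨n, hnmem, hn⟩ : ∃ n ∈ H.directionᗮ, n ≠ 0 := by
    have : Nontrivial H.directionᗮ := by
      rw [← Module.finrank_pos_iff (R := ℝ)]
      omega
    obtain ⟨v, hv⟩ := exists_ne (0 : H.directionᗮ)
    exact ⟨v, v.2, fun h => hv (Subtype.ext h)⟩
  have hspan : (Submodule.span ℝ {n}) = H.directionᗮ := by
    apply Submodule.eq_of_le_of_finrank_eq
    · rw [Submodule.span_le, Set.singleton_subset_iff]; exact hnmem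
    · rw [finrank_span_singleton hn, horth]
  -- common argument to produce the active-constraint property for a region
  have key : ∀ j : Fin K, F ⊆ R j → ∀ (m : ℕ) (a : Fin m → EuclideanSpace ℝ (Fin d))
      (c : Fin m → ℝ), R j = {y | ∀ i, ⟪a i, y⟫ ≤ c i} →
      ∀ i, ⟪a i, x⟫ = c i → ∃ r : ℝ, a i = r • n := by
    intro j hFj m a c hRj i heq
    -- the constraint is active on all of F
    have hallF : ∀ y ∈ F, ⟪a i, y⟫ = c i := by
      intro y hy
      have hyle : ⟪a i, y⟫ ≤ c i := by
        have := hFj hy; rw [hRj] at this; exact this i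
      rcases eq_or_ne y x with rfl | hyx
      · exact heq
      · by_contra hne
        have hlt : ⟪a i, y⟫ < c i := lt_of_le_of_ne hyle hne
        set t : ℝ := δ / (2 * (‖x - y‖ + 1)) with ht
        have htpos : 0 < t := by positivity
        set z := x + t • (x - y) with hz
        have hzH : z ∈ H := by
          have hyH : y ∈ H := subset_affineSpan ℝ F hy
          have hdir : x - y ∈ H.direction := by
            have := AffineSubspace.vsub_mem_direction hxH hyH
            rwa [vsub_eq_sub] at this
          have := AffineSubspace.vadd_mem_of_mem_direction
            (Submodule.smul_mem _ t hdir) hxH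
          rwa [vadd_eq_add, add_comm] at this
        have hzd : dist z x < δ := by
          rw [dist_eq_norm, hz]
          have h1 : x + t • (x - y) - x = t • (x - y) := by module
          rw [h1, norm_smul, Real.norm_eq_abs, abs_of_pos htpos, ht,
            div_mul_eq_mul_div, div_lt_iff₀ (by positivity)]
          nlinarith [norm_nonneg (x - y), hδ]
        have hzF : z ∈ F := hrel z hzH hzd
        have hzle : ⟪a i, z⟫ ≤ c i := by
          have := hFj hzF; rw [hRj] at this; exact this i
        have hcalc : ⟪a i, z⟫ = c i + t * (c i - ⟪a i, y⟫) := by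
          rw [hz, inner_add_right, real_inner_smul_right, inner_sub_right, heq]
        nlinarith
    -- hence a i annihilates the direction of H
    have hker : H.direction ≤ LinearMap.ker (innerSL ℝ (a i) : _ →L[ℝ] ℝ).toLinearMap := by
      rw [hH, direction_affineSpan, vectorSpan_def]
      rw [Submodule.span_le]
      rintro v ⟨y, hy, w, hw, rfl⟩
      simp only [SetLike.mem_coe, LinearMap.mem_ker, ContinuousLinearMap.coe_coe, vsub_eq_sub]
      have : ⟪a i, y - w⟫ = 0 := by
        rw [inner_sub_right, hallF y hy, hallF w hw, sub_self]
      exact this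
    have hmem : a i ∈ H.directionᗮ := by
      rw [Submodule.mem_orthogonal]
      intro u hu
      have := hker hu
      rw [LinearMap.mem_ker] at this
      have h2 : ⟪a i, u⟫ = 0 := this
      rw [real_inner_comm] at h2
      exact h2
    rw [← hspan, Submodule.mem_span_singleton] at hmem
    obtain ⟨r, hr⟩ := hmem
    exact ⟨r, hr.symm⟩
  -- apply aux_side to both regions
  obtain ⟨hkne, mk, ak, ck, hRk⟩ := hpoly k
  obtain ⟨hlne, ml, al, cl, hRl⟩ := hpoly l
  have hxk : x ∈ R k := hxFmem.1
  have hxl : x ∈ R l := hxFmem.2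
  obtain ⟨s₁, hs₁, ε₁, hε₁, hside₁⟩ := aux_side ak ck (R k) hRk (hintne k) x n hn hxk
    (key k (fun y hy => hy.1) mk ak ck hRk)
  obtain ⟨s₂, hs₂, ε₂, hε₂, hside₂⟩ := aux_side al cl (R l) hRl (hintne l) x n hn hxl
    (key l (fun y hy => hy.2) ml al cl hRl)
  have hnn : (0:ℝ) < ‖n‖ := norm_pos_iff.2 hn
  -- if the signs agree, the interiors of R k and R l would intersect
  have hdiff : s₁ = -s₂ := by
    by_contra hsame'
    have hsame : s₁ = s₂ := by
      rcases hs₁ with h1 | h1 <;> rcases hs₂ with h2 | h2 <;>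
        simp [h1, h2] at hsame' ⊢ <;> norm_num at hsame' ⊢
    exfalso
    set ε := min ε₁ ε₂ with hε
    have hεpos : 0 < ε := lt_min hε₁ hε₂
    set θ : ℝ := ε / (4 * ‖n‖) with hθ
    have hθpos : 0 < θ := by positivity
    set w := x - (s₁ * θ) • n with hw
    have hs1sq : s₁ * s₁ = 1 := by rcases hs₁ with h | h <;> rw [h] <;> ring
    have habs : |s₁| = 1 := by rcases hs₁ with h | h <;> rw [h] <;> norm_num
    have hsub : Metric.ball w (ε/4) ⊆ R k ∩ R l := by
      intro y hy
      rw [Metric.mem_ball, dist_eq_norm] at hy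
      have hwx : w - x = -((s₁ * θ) • n) := by rw [hw]; module
      have hnwx : ‖w - x‖ = θ * ‖n‖ := by
        rw [hwx, norm_neg, norm_smul, Real.norm_eq_abs, abs_mul, habs, one_mul,
          abs_of_pos hθpos]
      have hyx : dist y x < ε := by
        have h1 : dist y x ≤ dist y w + dist w x := dist_triangle y w x
        have h2 : dist y w < ε/4 := by rwa [dist_eq_norm]
        have h3 : dist w x = θ * ‖n‖ := by rw [dist_eq_norm, hnwx]
        have h4 : θ * ‖n‖ = ε / 4 := by rw [hθ]; field_simp
        linarith
      have hinner : s₁ * ⟪n, y - x⟫ < 0 := by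
        have h1 : ⟪n, y - x⟫ = ⟪n, y - w⟫ + ⟪n, w - x⟫ := by
          rw [← inner_add_right]
          congr 1
          module
        have h2 : ⟪n, w - x⟫ = -(s₁ * θ) * ‖n‖^2 := by
          rw [hwx, inner_neg_right, real_inner_smul_right, real_inner_self_eq_norm_sq]
          ring
        have h3 : |⟪n, y - w⟫| ≤ ‖n‖ * ‖y - w‖ := abs_real_inner_le_norm n (y - w)
        have h4 : ‖y - w‖ < ε/4 := hy
        have h5 : s₁ * ⟪n, y - x⟫ = s₁ * ⟪n, y - w⟫ - θ * ‖n‖^2 := by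
          have e : s₁ * ⟪n, y - x⟫ = s₁ * ⟪n, y - w⟫ - s₁ * s₁ * (θ * ‖n‖^2) := by
            rw [h1, h2]; ring
          rw [hs1sq, one_mul] at e
          exact e
        have h6 : s₁ * ⟪n, y - w⟫ ≤ ‖n‖ * ‖y - w‖ := by
          calc s₁ * ⟪n, y - w⟫ ≤ |s₁ * ⟪n, y - w⟫| := le_abs_self _
            _ = |s₁| * |⟪n, y - w⟫| := abs_mul _ _
            _ = |⟪n, y - w⟫| := by rw [habs, one_mul]
            _ ≤ ‖n‖ * ‖y - w‖ := h3
        have h7 : θ * ‖n‖^2 = ε * ‖n‖ / 4 := by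
          rw [hθ, div_mul_eq_mul_div, div_eq_div_iff (by positivity) (by norm_num : (4:ℝ) ≠ 0)]
          ring
        have h8 : ‖n‖ * ‖y - w‖ < ‖n‖ * (ε/4) := mul_lt_mul_of_pos_left h4 hnn
        have h9 : ‖n‖ * (ε/4) = ε * ‖n‖ / 4 := by ring
        linarith
      constructor
      · exact hside₁ y (lt_of_lt_of_le hyx (min_le_left _ _)) (le_of_lt hinner)
      · refine hside₂ y (lt_of_lt_of_le hyx (min_le_right _ _)) ?_
        rw [← hsame]
        exact le_of_lt hinner
    have hwmem : w ∈ interior (R k) ∩ interior (R l) := by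
      constructor
      · exact mem_interior.2 ⟨Metric.ball w (ε/4),
          fun y hy => (hsub hy).1, Metric.isOpen_ball, Metric.mem_ball_self (by positivity)⟩
      · exact mem_interior.2 ⟨Metric.ball w (ε/4),
          fun y hy => (hsub hy).2, Metric.isOpen_ball, Metric.mem_ball_self (by positivity)⟩
    rw [hdisj k l hkl] at hwmem
    exact hwmem
  -- opposite signs: the ball is covered
  refine ⟨min ε₁ ε₂, lt_min hε₁ hε₂, fun y hy => ?_⟩
  rw [Metric.mem_ball] at hy
  have hy₁ : dist y x < ε₁ := lt_of_lt_of_le hy (min_le_left _ _)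
  have hy₂ : dist y x < ε₂ := lt_of_lt_of_le hy (min_le_right _ _)
  rcases le_total (s₁ * ⟪n, y - x⟫) 0 with h | h
  · exact Or.inl (hside₁ y hy₁ h)
  · refine Or.inr (hside₂ y hy₂ ?_)
    have : s₂ * ⟪n, y - x⟫ = -(s₁ * ⟪n, y - x⟫) := by
      rw [hdiff]; ring
    rw [this]
    linarith
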